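/- Let G be a finite group and η an irreducible complex character of G. Then η is trivial on the center, i.e., η(z) = η(1) for all z ∈ Z(G), if and only if there exist irreducible complex characters χ_1, …, χ_n of G such that η occurs as a constituent of the pointwise product χ_1·conj(χ_1)·χ_2·conj(χ_2) ⋯ χ_n·conj(χ_n). (This canonically characterizes the representation subring R_{Z(G)} as the smallest representation subring containing all irreducible constituents of products χ·χ* with χ irreducible.) -/

import Mathlib

/-!
If `z` is central, it acts on every irreducible representation by a scalar `ω` of modulus one.
Hence each `χ χ̄` is invariant under translation by `z` while `η (z g) = ω η g`, so translating
by `z` multiplies `⟨∏ χᵢ χ̄ᵢ, η⟩` by `ω̄`, and this multiplicity can only be nonzero if `η z = η 1`.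

Conversely, put `θ g = ∑_{χ ∈ Irr G} |χ g|²`. Since `|χ g| ≤ χ 1`, with equality only if `g` acts
by a scalar, and an element acting by scalars on every irreducible representation is central
(`ℂ[G]` is semisimple), `θ g = θ 1` holds exactly on `Z(G)`. A polynomial `q` without constant
term such that `q (θ g)` is the indicator of `Z(G)` writes this indicator as a combination of the
powers `θ ^ (m + 1)`, each a sum of products `χ₁ χ̄₁ ⋯ χₙ χ̄ₙ`. If `η` is trivial on `Z(G)`, it
pairs nontrivially with the indicator, hence with one of these products.
-/

open CategoryTheory Finset

/-- The inner product of class functions on a finite group: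
`⟨φ, η⟩ = (1/|G|) ∑ g, φ g * conj (η g)`, giving the multiplicity of an irreducible
character `η` in `φ`. -/
noncomputable def charMult (G : Type) [Group G] [Fintype G] (φ η : G → ℂ) : ℂ :=
  (Fintype.card G : ℂ)⁻¹ * ∑ g : G, φ g * (starRingEnd ℂ) (η g)

/-- `χ` is an irreducible complex character of `G`: the character of some irreducible
finite-dimensional complex representation of `G`. -/
def IsIrrChar (G : Type) [Group G] (χ : G → ℂ) : Prop :=
  ∃ V : FDRep ℂ G, Simple V ∧ χ = V.character

open Module ComplexConjugate
open scoped MonoidAlgebra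

open scoped ComplexOrder in
theorem Complex.card_mul_eq_sum_of_norm_sum_eq_card {s : Multiset ℂ} (hs : ∀ z ∈ s, ‖z‖ = 1)
    (h : ‖s.sum‖ = Multiset.card s) : ∀ z ∈ s, (Multiset.card s : ℂ) * z = s.sum := by
  set n : ℝ := (Multiset.card s : ℝ)
  set S := s.sum
  have hre : ∀ z ∈ s, (z * conj S).re ≤ n := fun z hz => by
    simpa [hs z hz, h] using Complex.re_le_norm (z * conj S)
  have hsum : (s.map fun z => (z * conj S).re).sum = (s.map fun _ => n).sum := by
    have hre_sum : (s.map fun z => (z * conj S).re).sum =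
        Complex.reAddGroupHom (s.map (· * conj S)).sum := by
      rw [map_multiset_sum Complex.reAddGroupHom, Multiset.map_map]; rfl
    rw [hre_sum, Multiset.sum_map_mul_right, Multiset.map_id', Complex.mul_conj,
      Complex.normSq_eq_norm_sq, h]
    simp [n, sq]
  have heq : ∀ z ∈ s, (z * conj S).re = n := by
    by_contra! ⟨z, hz, hzn⟩
    exact (Multiset.sum_lt_sum hre ⟨z, hz, (hre z hz).lt_of_ne hzn⟩).ne hsum
  intro z hz
  have hreal : z * conj S = n := by
    have hnonneg : 0 ≤ z * conj S := Complex.re_eq_norm.mp (by simp [heq z hz, hs z hz, h])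
    apply Complex.ext <;> simp [heq z hz, ← (Complex.nonneg_iff.mp hnonneg).2]
  have hS : conj S * S = n * n := by
    rw [mul_comm, Complex.mul_conj, Complex.normSq_eq_norm_sq, h]; push_cast; ring
  have hn : (Multiset.card s : ℂ) ≠ 0 :=
    Nat.cast_ne_zero.mpr (Multiset.card_pos_iff_exists_mem.mpr ⟨z, hz⟩).ne'
  apply mul_left_cancel₀ hn
  have hcast : ((n : ℝ) : ℂ) = Multiset.card s := by simp [n]
  rw [hcast] at hreal hS
  linear_combination S * hreal - z * hS

namespace Module.End

open Polynomial

variable {V : Type*} [AddCommGroup V] [Module ℂ V] [FiniteDimensional ℂ V] {A : End ℂ V} {k : ℕ}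

theorem norm_eq_one_of_mem_roots_charpoly (hk : k ≠ 0) (hA : A ^ k = 1) {μ : ℂ}
    (hμ : μ ∈ A.charpoly.roots) : ‖μ‖ = 1 := by
  obtain ⟨v, hv⟩ := ((hasEigenvalue_iff_isRoot_charpoly A μ).mpr
    (isRoot_of_mem_roots hμ)).exists_hasEigenvector
  have hv' := hv.pow_apply k
  rw [hA, one_apply] at hv'
  exact Complex.norm_eq_one_of_pow_eq_one (smul_left_injective ℂ hv.2 (by simpa using hv'.symm)) hk

theorem card_roots_charpoly : Multiset.card A.charpoly.roots = finrank ℂ V := by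
  rw [← (IsAlgClosed.splits A.charpoly).natDegree_eq_card_roots, LinearMap.charpoly_natDegree]

theorem trace_eq_sum_roots_charpoly : LinearMap.trace ℂ V A = A.charpoly.roots.sum :=
  trace_eq_sum_roots_charpoly_of_splits (IsAlgClosed.splits _)

theorem norm_trace_le_finrank_of_pow_eq_one (hk : k ≠ 0) (hA : A ^ k = 1) :
    ‖LinearMap.trace ℂ V A‖ ≤ finrank ℂ V := by
  rw [trace_eq_sum_roots_charpoly, ← card_roots_charpoly]
  calc ‖A.charpoly.roots.sum‖ ≤ (A.charpoly.roots.map norm).sum := norm_multiset_sum_le _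
    _ = Multiset.card A.charpoly.roots := by
      rw [Multiset.map_congr rfl fun μ hμ => norm_eq_one_of_mem_roots_charpoly hk hA hμ]
      simp

theorem eq_smul_one_of_norm_trace_eq_finrank (hk : k ≠ 0) (hA : A ^ k = 1)
    (h : ‖LinearMap.trace ℂ V A‖ = finrank ℂ V) : ∃ u : ℂ, A = u • 1 := by
  set s := A.charpoly.roots
  have hroots := Complex.card_mul_eq_sum_of_norm_sum_eq_card
    (fun μ hμ => norm_eq_one_of_mem_roots_charpoly hk hA hμ)
    (by rw [← trace_eq_sum_roots_charpoly, card_roots_charpoly, h])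
  set u := s.sum / Multiset.card s
  have hss : A.IsSemisimple := isSemisimple_of_squarefree_aeval_eq_zero
    (separable_X_pow_sub_C (1 : ℂ) (Nat.cast_ne_zero.mpr hk) one_ne_zero).squarefree
    (by simp [hA])
  refine ⟨u, sub_eq_zero.mp ?_⟩
  rw [← Algebra.algebraMap_eq_smul_one]
  refine (isSemisimple_sub_algebraMap_iff.mpr hss).eq_zero_iff_forall_eigenvalue.mpr fun ν hν => ?_
  obtain ⟨v, hv⟩ := hν.exists_hasEigenvector
  have hAv : A v = (ν + u) • v := by
    have := hv.apply_eq_smul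
    rw [LinearMap.sub_apply, Module.algebraMap_end_apply, sub_eq_iff_eq_add] at this
    rw [this, add_smul]
  have hmem : ν + u ∈ s := by
    rw [mem_roots (LinearMap.charpoly_monic A).ne_zero, ← hasEigenvalue_iff_isRoot_charpoly,
      hasEigenvalue_iff, Submodule.ne_bot_iff]
    exact ⟨v, mem_eigenspace_iff.mpr hAv, hv.2⟩
  have hcard : (Multiset.card s : ℂ) ≠ 0 :=
    Nat.cast_ne_zero.mpr (Multiset.card_pos_iff_exists_mem.mpr ⟨_, hmem⟩).ne'
  have := hroots _ hmem
  rw [mul_add, mul_div_cancel₀ _ hcard, add_eq_right] at this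
  exact (mul_eq_zero.mp this).resolve_left hcard

end Module.End

namespace Representation

variable {k G M : Type*} [Field k] [Monoid G] [AddCommGroup M] [Module k M] [Module k[G] M]
  [IsScalarTower k k[G] M]

theorem ofModule'_apply (g : G) (x : M) :
    ofModule' (k := k) (G := G) M g x = MonoidAlgebra.of k G g • x := by
  simp [ofModule']

noncomputable def subrepresentationOfModule'OrderIso :
    Subrepresentation (ofModule' (k := k) (G := G) M) ≃o Submodule k[G] M where
  toFun σ :=
    { carrier := σ
      add_mem' := σ.toSubmodule.add_mem
      zero_mem' := σ.toSubmodule.zero_mem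
      smul_mem' a x hx := by
        induction a using MonoidAlgebra.induction_on with
        | of g => rw [← ofModule'_apply]; exact σ.apply_mem_toSubmodule g hx
        | add a b ha hb => rw [add_smul]; exact σ.toSubmodule.add_mem ha hb
        | smul r a ha => rw [smul_assoc]; exact σ.toSubmodule.smul_mem r ha }
  invFun N := ⟨N.restrictScalars k, fun g x hx => by
    rw [ofModule'_apply]; exact N.smul_mem _ hx⟩
  left_inv σ := rfl
  right_inv N := rfl
  map_rel_iff' := Iff.rfl

theorem isIrreducible_ofModule' [IsSimpleModule k[G] M] :
    (ofModule' (k := k) (G := G) M).IsIrreducible := by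
  rw [IsIrreducible, subrepresentationOfModule'OrderIso.isSimpleOrder_iff, ← isSimpleModule_iff]
  infer_instance

end Representation

theorem FDRep.simple_of_isIrreducible {k G V : Type} [Field k] [IsAlgClosed k] [CharZero k]
    [Group G] [Fintype G] [AddCommGroup V] [Module k V] [FiniteDimensional k V]
    (ρ : Representation k G V) [ρ.IsIrreducible] : Simple (FDRep.of ρ) := by
  have := invertibleOfNonzero (NeZero.ne (Nat.card G : k))
  rw [FDRep.simple_iff_char_is_norm_one]
  have h := Representation.char_orthonormal ρ ρ
  rw [if_pos ⟨.refl ρ⟩, inv_mul_eq_one₀ (NeZero.ne _)] at h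
  exact h.symm

theorem IsSemisimpleModule.eq_zero_of_forall_simple_mul_eq_zero {A : Type*} [Ring A]
    [IsSemisimpleModule A A] {a : A}
    (h : ∀ S : Submodule A A, IsSimpleModule A S → ∀ x ∈ S, a * x = 0) : a = 0 := by
  have ha : a ∈ (⊤ : Submodule A A).annihilator := by
    rw [← IsSemisimpleModule.sSup_simples_eq_top, sSup_eq_iSup', Submodule.annihilator_iSup,
      Submodule.mem_iInf]
    exact fun S => Submodule.mem_annihilator.mpr (h S S.2)
  simpa using Submodule.mem_annihilator.mp ha 1 trivial

section

variable {G : Type} [Group G] [Fintype G]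

theorem exists_of_smul_eq_smul_of_isSimpleModule {g : G}
    (hg : ∀ W : FDRep ℂ G, Simple W → ∃ u : ℂ, W.ρ g = u • 1)
    (M : Type) [AddCommGroup M] [Module ℂ M] [Module ℂ[G] M] [IsScalarTower ℂ ℂ[G] M]
    [Module.Finite ℂ M] [IsSimpleModule ℂ[G] M] :
    ∃ u : ℂ, ∀ x : M, MonoidAlgebra.of ℂ G g • x = u • x := by
  have := Representation.isIrreducible_ofModule' (k := ℂ) (G := G) (M := M)
  obtain ⟨u, hu⟩ := hg _ (FDRep.simple_of_isIrreducible (Representation.ofModule' M))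
  exact ⟨u, fun x => by rw [← Representation.ofModule'_apply]; exact LinearMap.congr_fun hu x⟩

theorem mem_center_of_forall_simple_ρ_eq_smul {g : G}
    (hg : ∀ W : FDRep ℂ G, Simple W → ∃ u : ℂ, W.ρ g = u • 1) : g ∈ Subgroup.center G := by
  refine Subgroup.mem_center_iff.mpr fun h => MonoidAlgebra.of_injective (R := ℂ) ?_
  rw [map_mul, map_mul, ← sub_eq_zero]
  refine IsSemisimpleModule.eq_zero_of_forall_simple_mul_eq_zero fun S _ x hx => ?_
  obtain ⟨u, hu⟩ := exists_of_smul_eq_smul_of_isSimpleModule hg S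
  set e := MonoidAlgebra.of ℂ G
  have hgx : e g * x = u • x := congrArg Subtype.val (hu ⟨x, hx⟩)
  have hghx : e g * (e h * x) = u • (e h * x) :=
    congrArg Subtype.val (hu ⟨_, S.smul_mem (e h) hx⟩)
  rw [sub_mul, mul_assoc, mul_assoc, hgx, hghx, mul_smul_comm, sub_self]

end

namespace FDRep

variable {G : Type} [Group G] (V : FDRep ℂ G)

theorem exists_ρ_eq_smul_of_mem_center [Simple V] {z : G} (hz : z ∈ Subgroup.center G) :
    ∃ ω : ℂ, V.ρ z = ω • 1 := by
  let f : V ⟶ V := ⟨ObjectProperty.homMk (ModuleCat.ofHom (V.ρ z)), fun g => by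
    ext x
    change V.ρ z (V.ρ g x) = V.ρ g (V.ρ z x)
    rw [← Module.End.mul_apply, ← Module.End.mul_apply, ← map_mul, ← map_mul,
      Subgroup.mem_center_iff.mp hz g]⟩
  obtain ⟨ω, hω⟩ := endomorphism_simple_eq_smul_id ℂ f
  exact ⟨ω, LinearMap.ext fun x => (congrArg (fun t => t.hom.hom.hom x) hω).symm⟩

variable [Fintype G]

theorem ρ_pow_card_eq_one (g : G) : V.ρ g ^ Fintype.card G = 1 := by
  rw [← map_pow, pow_card_eq_one, map_one]

theorem norm_character_le (g : G) : ‖V.character g‖ ≤ finrank ℂ V :=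
  End.norm_trace_le_finrank_of_pow_eq_one Fintype.card_ne_zero (V.ρ_pow_card_eq_one g)

theorem exists_ρ_eq_smul_of_norm_character_eq {g : G} (h : ‖V.character g‖ = finrank ℂ V) :
    ∃ u : ℂ, V.ρ g = u • 1 :=
  End.eq_smul_one_of_norm_trace_eq_finrank Fintype.card_ne_zero (V.ρ_pow_card_eq_one g) h

theorem finrank_pos [Simple V] : 0 < finrank ℂ V := by
  by_contra! h
  have hχ : ∀ g, V.character g = 0 := fun g =>
    norm_le_zero_iff.mp (by simpa [Nat.le_zero.mp h] using V.norm_character_le g)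
  have := (simple_iff_char_is_norm_one V).mp ‹_›
  simp only [hχ, zero_mul, sum_const_zero] at this
  exact Nat.card_pos.ne' (by exact_mod_cast this.symm)

theorem exists_norm_eq_one_character_mul_of_mem_center [Simple V] {z : G}
    (hz : z ∈ Subgroup.center G) :
    ∃ ω : ℂ, ‖ω‖ = 1 ∧ ∀ g, V.character (z * g) = ω * V.character g := by
  obtain ⟨ω, hω⟩ := V.exists_ρ_eq_smul_of_mem_center hz
  have hχ : ∀ g, V.character (z * g) = ω * V.character g := fun g => by
    simp [character, hω]
  refine ⟨ω, Complex.norm_eq_one_of_pow_eq_one ?_ (Fintype.card_ne_zero (α := G)), hχ⟩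
  have h := congrArg (LinearMap.trace ℂ V) (V.ρ_pow_card_eq_one z)
  rw [hω, smul_pow, one_pow, map_smul, LinearMap.trace_one, smul_eq_mul] at h
  exact (mul_eq_right₀ (Nat.cast_ne_zero.mpr V.finrank_pos.ne')).mp h

theorem sum_character_mul_character_inv_eq_zero (W : FDRep ℂ G) [Simple V] [Simple W]
    (h : V.character ≠ W.character) :
    ∑ g, V.character g * W.character g⁻¹ = 0 := by
  have := invertibleOfNonzero (NeZero.ne (Nat.card G : ℂ))
  have h' := char_orthonormal V W
  rw [if_neg fun ⟨e⟩ => h (char_iso e)] at h'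
  simpa using h'

end FDRep

namespace IsIrrChar

variable {G : Type} [Group G] [Fintype G] {χ : G → ℂ}

theorem map_one_ne_zero (hχ : IsIrrChar G χ) : χ 1 ≠ 0 := by
  obtain ⟨V, _, rfl⟩ := hχ
  rw [FDRep.char_one]
  exact Nat.cast_ne_zero.mpr V.finrank_pos.ne'

theorem norm_le (hχ : IsIrrChar G χ) (g : G) : ‖χ g‖ ≤ ‖χ 1‖ := by
  obtain ⟨V, _, rfl⟩ := hχ
  simpa [FDRep.char_one] using V.norm_character_le g

theorem exists_norm_eq_one_mul_of_mem_center (hχ : IsIrrChar G χ) {z : G}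
    (hz : z ∈ Subgroup.center G) : ∃ ω : ℂ, ‖ω‖ = 1 ∧ ∀ g, χ (z * g) = ω * χ g := by
  obtain ⟨V, _, rfl⟩ := hχ
  exact V.exists_norm_eq_one_character_mul_of_mem_center hz

theorem norm_mul_left_of_mem_center (hχ : IsIrrChar G χ) {z : G} (hz : z ∈ Subgroup.center G)
    (g : G) : ‖χ (z * g)‖ = ‖χ g‖ := by
  obtain ⟨ω, hω, hχz⟩ := hχ.exists_norm_eq_one_mul_of_mem_center hz
  rw [hχz, norm_mul, hω, one_mul]

end IsIrrChar

theorem setOf_isIrrChar_finite (G : Type) [Group G] [Fintype G] :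
    {χ : G → ℂ | IsIrrChar G χ}.Finite := by
  let B : LinearMap.BilinForm ℂ (G → ℂ) := LinearMap.mk₂ ℂ (fun φ ψ => ∑ g, φ g * ψ g⁻¹)
    (by simp [add_mul, sum_add_distrib]) (by simp [mul_sum, mul_assoc])
    (by simp [mul_add, sum_add_distrib]) (by simp [mul_sum, mul_left_comm])
  refine LinearIndependent.setFinite (LinearMap.BilinForm.linearIndependent_of_iIsOrtho (B := B)
    (fun ⟨χ, V, _, hV⟩ ⟨ψ, W, _, hW⟩ hne => ?_) fun ⟨χ, V, _, hV⟩ => ?_)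
  · subst hV hW
    exact V.sum_character_mul_character_inv_eq_zero W fun h => hne (Subtype.ext h)
  · subst hV
    change ∑ g, V.character g * V.character g⁻¹ ≠ 0
    rw [(FDRep.simple_iff_char_is_norm_one V).mp ‹_›]
    exact Nat.cast_ne_zero.mpr Nat.card_pos.ne'

section charMult

variable {G : Type} [Group G] [Fintype G]

theorem charMult_sum {ι : Type*} (s : Finset ι) (φ : ι → G → ℂ) (η : G → ℂ) :
    charMult G (fun g => ∑ i ∈ s, φ i g) η = ∑ i ∈ s, charMult G (φ i) η := by
  simp only [charMult, sum_mul, mul_sum]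
  exact sum_comm

theorem charMult_const_mul (c : ℂ) (φ η : G → ℂ) :
    charMult G (fun g => c * φ g) η = c * charMult G φ η := by
  simp only [charMult, mul_sum]
  exact sum_congr rfl fun g _ => by ring

theorem charMult_mul_const (c : ℂ) (φ η : G → ℂ) :
    charMult G φ (fun g => c * η g) = conj c * charMult G φ η := by
  simp only [charMult, mul_sum, map_mul]
  exact sum_congr rfl fun g _ => by ring

theorem charMult_comp_mul_left (z : G) (φ η : G → ℂ) :
    charMult G (fun g => φ (z * g)) (fun g => η (z * g)) = charMult G φ η := by
  simp only [charMult]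
  congr 1
  exact Fintype.sum_equiv (Equiv.mulLeft z) _ _ fun _ => rfl

theorem charMult_eval_eq_zero {f η : G → ℂ}
    (hf : ∀ m : ℕ, charMult G (fun g => f g ^ (m + 1)) η = 0) {q : Polynomial ℂ}
    (hq : q.coeff 0 = 0) : charMult G (fun g => q.eval (f g)) η = 0 := by
  obtain ⟨p, rfl⟩ := Polynomial.X_dvd_iff.mpr hq
  have hexpand : ∀ g, (Polynomial.X * p).eval (f g) =
      ∑ i ∈ range (p.natDegree + 1), p.coeff i * f g ^ (i + 1) := fun g => by
    rw [Polynomial.eval_mul, Polynomial.eval_X, Polynomial.eval_eq_sum_range, mul_sum]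
    exact sum_congr rfl fun i _ => by ring
  simp only [hexpand, charMult_sum, charMult_const_mul, hf, mul_zero, sum_const_zero]

theorem charMult_indicator_center_ne_zero [DecidablePred (· ∈ Subgroup.center G)] {η : G → ℂ}
    (hη1 : η 1 ≠ 0) (hZ : ∀ z ∈ Subgroup.center G, η z = η 1) :
    charMult G (fun g => if g ∈ Subgroup.center G then 1 else 0) η ≠ 0 := by
  have hsum : ∑ g, (if g ∈ Subgroup.center G then 1 else 0) * conj (η g) =
      #{g | g ∈ Subgroup.center G} * conj (η 1) := by
    simp_rw [ite_mul, one_mul, zero_mul, ← sum_filter]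
    rw [sum_congr rfl fun g hg => by rw [hZ g (mem_filter.mp hg).2], sum_const, nsmul_eq_mul]
  have hcard : #{g | g ∈ Subgroup.center G} ≠ 0 :=
    (card_pos.mpr ⟨1, mem_filter.mpr ⟨mem_univ _, Subgroup.one_mem _⟩⟩).ne'
  rw [charMult, hsum]
  simp [hcard, hη1, Fintype.card_ne_zero]

end charMult

section sumNormSqIrrChar

variable (G : Type) [Group G] [Fintype G]

abbrev IrrChar : Type := {χ : G → ℂ // IsIrrChar G χ}

noncomputable instance : Fintype (IrrChar G) :=
  (setOf_isIrrChar_finite G).fintype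

/-- By column orthogonality this is the order of the centralizer of `g`. -/
noncomputable def sumNormSqIrrChar (g : G) : ℝ :=
  ∑ χ : IrrChar G, ‖χ.1 g‖ ^ 2

variable {G}

theorem sumNormSqIrrChar_eq_iff_mem_center {g : G} :
    sumNormSqIrrChar G g = sumNormSqIrrChar G 1 ↔ g ∈ Subgroup.center G := by
  constructor
  · intro h
    have hle : ∀ χ ∈ (univ : Finset (IrrChar G)), ‖χ.1 g‖ ^ 2 ≤ ‖χ.1 1‖ ^ 2 := fun χ _ =>
      pow_le_pow_left₀ (norm_nonneg _) (χ.2.norm_le g) 2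
    have heq := (sum_eq_sum_iff_of_le hle).mp h
    refine mem_center_of_forall_simple_ρ_eq_smul fun W _ =>
      W.exists_ρ_eq_smul_of_norm_character_eq ?_
    have hW : ‖W.character g‖ ^ 2 = ‖W.character 1‖ ^ 2 :=
      heq ⟨W.character, W, ‹_›, rfl⟩ (mem_univ _)
    rw [FDRep.char_one, Complex.norm_natCast] at hW
    exact (sq_eq_sq₀ (norm_nonneg _) (Nat.cast_nonneg _)).mp hW
  · intro hg
    refine sum_congr rfl fun χ _ => ?_
    rw [← χ.2.norm_mul_left_of_mem_center hg 1, mul_one]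

theorem sumNormSqIrrChar_one_pos {η : G → ℂ} (hη : IsIrrChar G η) :
    0 < sumNormSqIrrChar G 1 :=
  calc 0 < ‖η 1‖ ^ 2 := pow_pos (norm_pos_iff.mpr hη.map_one_ne_zero) 2
    _ ≤ sumNormSqIrrChar G 1 := single_le_sum (f := fun χ : IrrChar G =>
        ‖χ.1 1‖ ^ 2) (fun _ _ => by positivity) (mem_univ ⟨η, hη⟩)

theorem ofReal_sumNormSqIrrChar_pow (g : G) (n : ℕ) :
    (sumNormSqIrrChar G g : ℂ) ^ n =
      ∑ χ : Fin n → IrrChar G, ∏ i, (χ i).1 g * conj ((χ i).1 g) := by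
  simp only [sumNormSqIrrChar, Complex.ofReal_sum, Complex.ofReal_pow, Fintype.sum_pow,
    Complex.mul_conj']

end sumNormSqIrrChar

theorem Polynomial.exists_coeff_zero_eq_zero_and_eval_eq_ite {K : Type*} [Field K] [DecidableEq K]
    (s : Finset K) {a : K} (ha : a ≠ 0) :
    ∃ q : Polynomial K, q.coeff 0 = 0 ∧ ∀ b ∈ s, q.eval b = if b = a then 1 else 0 := by
  have hnode {b : K} (hb : b ∈ insert 0 s) :
      (Lagrange.interpolate (insert 0 s) id fun b => if b = a then 1 else 0).eval b =
        if b = a then 1 else 0 :=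
    Lagrange.eval_interpolate_at_node _ (Set.injOn_id _) hb
  refine ⟨_, ?_, fun b hb => hnode (mem_insert_of_mem hb)⟩
  rw [Polynomial.coeff_zero_eq_eval_zero, hnode (mem_insert_self 0 s), if_neg ha.symm]

section

variable {G : Type} [Group G] [Fintype G]

theorem charMult_ofReal_sumNormSqIrrChar_pow_eq_zero {η : G → ℂ}
    (h : ∀ (n : ℕ) (χ : Fin (n + 1) → G → ℂ), (∀ i, IsIrrChar G (χ i)) →
      charMult G (fun g => ∏ i, χ i g * conj (χ i g)) η = 0) (m : ℕ) :
    charMult G (fun g => (sumNormSqIrrChar G g : ℂ) ^ (m + 1)) η = 0 := by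
  simp only [ofReal_sumNormSqIrrChar_pow, charMult_sum]
  exact sum_eq_zero fun χ _ => h m (fun i => (χ i).1) fun i => (χ i).2

theorem exists_charMult_prod_mul_conj_ne_zero {η : G → ℂ} (hη : IsIrrChar G η)
    (hZ : ∀ z ∈ Subgroup.center G, η z = η 1) :
    ∃ (n : ℕ) (χ : Fin (n + 1) → G → ℂ), (∀ i, IsIrrChar G (χ i)) ∧
      charMult G (fun g => ∏ i, χ i g * conj (χ i g)) η ≠ 0 := by
  classical
  by_contra! h
  let θ : G → ℂ := fun g => sumNormSqIrrChar G g
  obtain ⟨q, hq0, hq⟩ := Polynomial.exists_coeff_zero_eq_zero_and_eval_eq_ite (univ.image θ)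
    (Complex.ofReal_ne_zero.mpr (sumNormSqIrrChar_one_pos hη).ne')
  have hqθ : (fun g => q.eval (θ g)) = fun g => if g ∈ Subgroup.center G then 1 else 0 :=
    funext fun g => by
      rw [hq _ (mem_image_of_mem θ (mem_univ g))]
      simp only [θ, Complex.ofReal_inj, sumNormSqIrrChar_eq_iff_mem_center]
  have h0 := charMult_eval_eq_zero (charMult_ofReal_sumNormSqIrrChar_pow_eq_zero h) hq0
  rw [hqθ] at h0
  exact charMult_indicator_center_ne_zero hη.map_one_ne_zero hZ h0

theorem IsIrrChar.apply_eq_apply_one_of_charMult_ne_zero {η : G → ℂ} (hη : IsIrrChar G η)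
    {ι : Type*} [Fintype ι] {χ : ι → G → ℂ} (hχ : ∀ i, IsIrrChar G (χ i))
    (h : charMult G (fun g => ∏ i, χ i g * conj (χ i g)) η ≠ 0) :
    ∀ z ∈ Subgroup.center G, η z = η 1 := by
  intro z hz
  obtain ⟨ω, -, hηz⟩ := hη.exists_norm_eq_one_mul_of_mem_center hz
  have hφ : ∀ g, ∏ i, χ i (z * g) * conj (χ i (z * g)) = ∏ i, χ i g * conj (χ i g) :=
    fun g => prod_congr rfl fun i _ => by
      rw [Complex.mul_conj', Complex.mul_conj', (hχ i).norm_mul_left_of_mem_center hz]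
  have hfix := charMult_comp_mul_left z (fun g => ∏ i, χ i g * conj (χ i g)) η
  simp only [hφ, hηz, charMult_mul_const] at hfix
  have hω : ω = 1 := by
    simpa using congrArg conj (mul_right_cancel₀ h (hfix.trans (one_mul _).symm))
  rw [← mul_one z, hηz, hω, one_mul]

end

/-- An irreducible character `η` of a finite group `G` is trivial on the center `Z(G)`
if and only if it occurs as a constituent of some pointwise product
`χ₁·conj(χ₁) ⋯ χₙ·conj(χₙ)` of irreducible characters with their conjugates.  This
characterizes the representation subring `R_{Z(G)}` as the smallest representation
subring containing all irreducible constituents of the products `χ·χ*`. -/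
theorem trivial_on_center_iff_constituent_of_prod_with_conj (G : Type) [Group G]
    [Fintype G] (η : G → ℂ) (hη : IsIrrChar G η) :
    (∀ z ∈ Subgroup.center G, η z = η 1) ↔
      ∃ (n : ℕ) (χ : Fin (n + 1) → G → ℂ), (∀ i, IsIrrChar G (χ i)) ∧
        charMult G (fun g => ∏ i, χ i g * (starRingEnd ℂ) (χ i g)) η ≠ 0 :=
  ⟨exists_charMult_prod_mul_conj_ne_zero hη, fun ⟨_, _, hχ, h⟩ =>
    hη.apply_eq_apply_one_of_charMult_ne_zero hχ h⟩
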